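/- arXiv:2506.18948 — 2 statements merged into one kernel-verified Lean document; each statement's English description precedes it below -/
import Mathlib

section
/- Let ν ∈ (0,1), let 0 = t_0 < t_1 < ⋯ < t_N = T be an arbitrary mesh with steps τ_k = t_k − t_{k−1}, let A^{(n)}_{n−k} = (1/τ_k) ∫_{t_{k−1}}^{t_k} (t_n − s)^{−ν}/Γ(1−ν) ds, and let the real numbers P^{(n)}_{n−j} (1 ≤ j ≤ n ≤ N) satisfy the complementary identity ∑_{j=k}^n P^{(n)}_{n−j} A^{(j)}_{j−k} = 1 for all 1 ≤ k ≤ n ≤ N. Then 0 ≤ P^{(n)}_{n−j} ≤ Γ(2−ν) τ_j^ν for all 1 ≤ j ≤ n ≤ N. -/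
open MeasureTheory

/-- The L1 coefficients `A^{(n)}_{n-k} = (1/τ_k) ∫_{t_{k-1}}^{t_k} (t_n - s)^{-ν}/Γ(1-ν) ds`. -/
noncomputable def L1coeff (ν : ℝ) (t : ℕ → ℝ) (n k : ℕ) : ℝ :=
  (t k - t (k - 1))⁻¹ * ∫ s in (t (k - 1))..(t k), (t n - s) ^ (-ν) / Real.Gamma (1 - ν)

/-!
The L1 coefficient `A^{(i)}_{i-k}` is a difference quotient of the concave function
`x ↦ x ^ (1 - ν) / Γ(2 - ν)` over `[t_i - t_k, t_i - t_{k-1}]`, so it is positive and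
nondecreasing in `k`. Subtracting the complementary identities at `k` and `k + 1` gives
`P^{(n)}_{n-k} A^{(k)}_0 = ∑_{i > k} P^{(n)}_{n-i} (A^{(i)}_{i-k-1} - A^{(i)}_{i-k})`, so
nonnegativity of the kernels propagates downwards from `k = n`. All terms of the identity at `k = j`
are then nonnegative, whence `P^{(n)}_{n-j} A^{(j)}_0 ≤ 1`, and `A^{(j)}_0 = τ_j^{-ν} / Γ(2 - ν)`.
-/

open Finset

section TriangularSystem

variable {m n : ℕ} {p : ℕ → ℝ} {a : ℕ → ℕ → ℝ}

theorem nonneg_of_sum_mul_eq_one (hdiag : ∀ k, m ≤ k → k ≤ n → 0 < a k k)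
    (hmono : ∀ i k, m ≤ k → k < i → i ≤ n → a i k ≤ a i (k + 1))
    (hsum : ∀ k, m ≤ k → k ≤ n → ∑ i ∈ Icc k n, p i * a i k = 1)
    {k : ℕ} (hmk : m ≤ k) (hkn : k ≤ n) : 0 ≤ p k := by
  induction k using Nat.strong_decreasing_induction with
  | base => exact ⟨n, fun k hk _ hkn => absurd hkn (not_le.mpr hk)⟩
  | step k ih =>
    refine (mul_nonneg_iff_of_pos_right (hdiag k hmk hkn)).mp ?_
    obtain rfl | hlt := hkn.eq_or_lt
    · have h := hsum k hmk le_rfl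
      rw [Icc_self, sum_singleton] at h
      exact h ▸ zero_le_one
    have hk := hsum k hmk hkn
    rw [← add_sum_Ioc_eq_sum_Icc hkn] at hk
    have hk1 := hsum (k + 1) (by omega) hlt
    rw [Icc_add_one_left_eq_Ioc] at hk1
    have hdiff : p k * a k k = ∑ i ∈ Ioc k n, p i * (a i (k + 1) - a i k) := by
      simp only [mul_sub, sum_sub_distrib]
      linarith
    rw [hdiff]
    refine sum_nonneg fun i hi => ?_
    obtain ⟨hki, hin⟩ := mem_Ioc.mp hi
    exact mul_nonneg (ih i hki (by omega) hin) (sub_nonneg.mpr (hmono i k hmk hki hin))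

end TriangularSystem

section L1coeff

variable {ν : ℝ} {t : ℕ → ℝ} {i k : ℕ}

theorem L1coeff_eq (hν : ν < 1) (t : ℕ → ℝ) (i k : ℕ) :
    L1coeff ν t i k = ((t i - t (k - 1)) ^ (1 - ν) - (t i - t k) ^ (1 - ν)) /
      (t k - t (k - 1)) / Real.Gamma (2 - ν) := by
  have hΓ : Real.Gamma (2 - ν) = (1 - ν) * Real.Gamma (1 - ν) := by
    rw [show 2 - ν = (1 - ν) + 1 by ring, Real.Gamma_add_one (by linarith)]
  rw [L1coeff, intervalIntegral.integral_div,
    intervalIntegral.integral_comp_sub_left (fun u : ℝ => u ^ (-ν)),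
    integral_rpow (Or.inl (by linarith)), show -ν + 1 = 1 - ν by ring, hΓ]
  field_simp

theorem L1coeff_pos (hν : ν < 1) (hk : t (k - 1) < t k) (hki : t k ≤ t i) :
    0 < L1coeff ν t i k := by
  rw [L1coeff_eq hν]
  have hΓ : 0 < Real.Gamma (2 - ν) := Real.Gamma_pos_of_pos (by linarith)
  have hnum : (t i - t k) ^ (1 - ν) < (t i - t (k - 1)) ^ (1 - ν) :=
    Real.rpow_lt_rpow (by linarith) (by linarith) (by linarith)
  exact div_pos (div_pos (by linarith) (by linarith)) hΓ

theorem L1coeff_le_L1coeff_succ (hν₀ : 0 ≤ ν) (hν₁ : ν < 1) (hk : t (k - 1) < t k)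
    (hk₁ : t k < t (k + 1)) (hki : t (k + 1) ≤ t i) :
    L1coeff ν t i k ≤ L1coeff ν t i (k + 1) := by
  rw [L1coeff_eq hν₁, L1coeff_eq hν₁, Nat.add_sub_cancel]
  have hΓ : 0 < Real.Gamma (2 - ν) := Real.Gamma_pos_of_pos (by linarith)
  gcongr ?_ / _
  have hslope := (Real.concaveOn_rpow (p := 1 - ν) (by linarith) (by linarith)).slope_anti_adjacent
    (x := t i - t (k + 1)) (y := t i - t k) (z := t i - t (k - 1))
    (Set.mem_Ici.mpr (by linarith)) (Set.mem_Ici.mpr (by linarith)) (by linarith) (by linarith)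
  convert hslope using 2 <;> ring

theorem L1coeff_self (hν : ν < 1) (hk : t (k - 1) < t k) :
    L1coeff ν t k k = (t k - t (k - 1)) ^ (-ν) / Real.Gamma (2 - ν) := by
  rw [L1coeff_eq hν t k k, sub_self, Real.zero_rpow (by linarith), sub_zero,
    ← Real.rpow_sub_one (by linarith), sub_sub_cancel_left]

end L1coeff

theorem complementary_kernel_bounds_general
    (ν : ℝ) (hν : ν ∈ Set.Ioo (0 : ℝ) 1) (N : ℕ)
    (t : ℕ → ℝ)
    (hmono : ∀ k < N, t k < t (k + 1))
    (P : ℕ → ℕ → ℝ)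
    (hP : ∀ n k, 1 ≤ k → k ≤ n → n ≤ N →
      ∑ j ∈ Finset.Icc k n, P n j * L1coeff ν t j k = 1)
    (n j : ℕ) (h1j : 1 ≤ j) (hjn : j ≤ n) (hnN : n ≤ N) :
    0 ≤ P n j ∧ P n j ≤ Real.Gamma (2 - ν) * (t j - t (j - 1)) ^ ν := by
  obtain ⟨hν₀, hν₁⟩ := hν
  have hstep : ∀ k, 1 ≤ k → k ≤ N → t (k - 1) < t k := fun k hk hkN => by
    simpa [Nat.sub_add_cancel hk] using hmono (k - 1) (by omega)
  have hle : ∀ k i, k ≤ i → i ≤ N → t k ≤ t i := fun k i hki hiN =>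
    (strictMonoOn_Iic_of_lt_succ hmono).monotoneOn (Set.mem_Iic.mpr (by omega))
      (Set.mem_Iic.mpr hiN) hki
  have hnonneg : ∀ k, 1 ≤ k → k ≤ n → 0 ≤ P n k := fun k =>
    nonneg_of_sum_mul_eq_one
      (fun k hk hkn => L1coeff_pos hν₁ (hstep k hk (by omega)) le_rfl)
      (fun i k hk hki hin => L1coeff_le_L1coeff_succ hν₀.le hν₁ (hstep k hk (by omega))
        (hmono k (by omega)) (hle _ _ hki (by omega)))
      (fun k hk hkn => hP n k hk hkn hnN)
  refine ⟨hnonneg j h1j hjn, ?_⟩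
  have hτ := hstep j h1j (by omega)
  have hone : P n j * L1coeff ν t j j ≤ 1 := by
    rw [← hP n j h1j hjn hnN]
    refine single_le_sum (f := fun i => P n i * L1coeff ν t i j) (fun i hi => ?_)
      (mem_Icc.mpr ⟨le_rfl, hjn⟩)
    obtain ⟨hji, hin⟩ := mem_Icc.mp hi
    exact mul_nonneg (hnonneg i (h1j.trans hji) hin)
      (L1coeff_pos hν₁ hτ (hle j i hji (hin.trans hnN))).le
  calc P n j ≤ 1 / L1coeff ν t j j := (le_div_iff₀ (L1coeff_pos hν₁ hτ le_rfl)).mpr hone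
    _ = Real.Gamma (2 - ν) * (t j - t (j - 1)) ^ ν := by
      rw [L1coeff_self hν₁ hτ, one_div_div, Real.rpow_neg (by linarith), div_inv_eq_mul]

/-- Bounds for the discrete complementary convolution kernels:
if `∑_{j=k}^n P^{(n)}_{n-j} A^{(j)}_{j-k} = 1` for `1 ≤ k ≤ n ≤ N`, then
`0 ≤ P^{(n)}_{n-j} ≤ Γ(2-ν) τ_j^ν`.  Here `P n j` denotes `P^{(n)}_{n-j}`. -/
theorem complementary_kernel_bounds
    (ν T : ℝ) (hν : ν ∈ Set.Ioo (0 : ℝ) 1) (N : ℕ) (hN : 0 < N)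
    (t : ℕ → ℝ) (ht0 : t 0 = 0) (htN : t N = T)
    (hmono : ∀ k < N, t k < t (k + 1))
    (P : ℕ → ℕ → ℝ)
    (hP : ∀ n k, 1 ≤ k → k ≤ n → n ≤ N →
      ∑ j ∈ Finset.Icc k n, P n j * L1coeff ν t j k = 1)
    (n j : ℕ) (h1j : 1 ≤ j) (hjn : j ≤ n) (hnN : n ≤ N) :
    0 ≤ P n j ∧ P n j ≤ Real.Gamma (2 - ν) * (t j - t (j - 1)) ^ ν :=
  complementary_kernel_bounds_general ν hν N t hmono P hP n j h1j hjn hnN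
end

section
/- Let ν ∈ (0,1). There exists a constant C > 0 depending only on ν such that for every mesh 0 = t_0 < t_1 < ⋯ < t_N = T with steps τ_k = t_k − t_{k−1}, with A^{(n)}_{n−k} = (1/τ_k) ∫_{t_{k−1}}^{t_k} (t_n − s)^{−ν}/Γ(1−ν) ds and P^{(n)}_{n−j} the real numbers satisfying ∑_{j=k}^n P^{(n)}_{n−j} A^{(j)}_{j−k} = 1 for all 1 ≤ k ≤ n ≤ N, one has ∑_{j=1}^n P^{(n)}_{n−j} · t_j^{−ν}/Γ(1−ν) ≤ C for every 1 ≤ n ≤ N. -/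
/-!
One can take `C = 1`. Since `s ↦ ω_{1-ν}(t_j - s)` decreases, the L1 coefficient
`A^{(j)}_{j-1}`, an average of it over `[t_0, t_1]`, dominates `ω_{1-ν}(t_j)`; so the sum is at
most `∑_j P^{(n)}_{n-j} A^{(j)}_{j-1} = 1` once the kernels `P^{(n)}_{n-j}` are known to be
nonnegative. Nonnegativity holds for the complementary kernels of any positive family
`A^{(i)}_{i-k}` that increases with `k`: subtracting the defining identities at `k` and `k + 1`
expresses `P^{(n)}_{n-k} A^{(k)}_0` as a nonnegative combination of the later kernels.
-/

open MeasureTheory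

open Finset

section L1Coefficients

variable {ν a b c : ℝ}

theorem intervalIntegrable_sub_rpow_neg_div_Gamma (hν : ν < 1) :
    IntervalIntegrable (fun s => (c - s) ^ (-ν) / Real.Gamma (1 - ν)) volume a b := by
  have h := (intervalIntegral.intervalIntegrable_rpow' (a := c - a) (b := c - b)
    (r := -ν) (by linarith)).comp_sub_left c
  simp only [sub_sub_cancel] at h
  exact h.div_const _

theorem mul_le_integral_sub_rpow_neg_div_Gamma (hν0 : 0 ≤ ν) (hν1 : ν < 1) (hab : a ≤ b)
    (hbc : b ≤ c) :
    (b - a) * ((c - a) ^ (-ν) / Real.Gamma (1 - ν)) ≤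
      ∫ s in a..b, (c - s) ^ (-ν) / Real.Gamma (1 - ν) := by
  have hΓ := Real.Gamma_pos_of_pos (sub_pos.mpr hν1)
  rw [← smul_eq_mul, ← intervalIntegral.integral_const]
  exact intervalIntegral.integral_mono_on_of_le_Ioo hab intervalIntegrable_const
    (intervalIntegrable_sub_rpow_neg_div_Gamma hν1) fun s hs => div_le_div_of_nonneg_right
      (Real.rpow_le_rpow_of_nonpos (by linarith [hs.2]) (by linarith [hs.1]) (by linarith)) hΓ.le

theorem integral_sub_rpow_neg_div_Gamma_le_mul (hν0 : 0 ≤ ν) (hν1 : ν < 1) (hab : a ≤ b)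
    (hbc : b < c) :
    ∫ s in a..b, (c - s) ^ (-ν) / Real.Gamma (1 - ν) ≤
      (b - a) * ((c - b) ^ (-ν) / Real.Gamma (1 - ν)) := by
  have hΓ := Real.Gamma_pos_of_pos (sub_pos.mpr hν1)
  rw [← smul_eq_mul, ← intervalIntegral.integral_const]
  exact intervalIntegral.integral_mono_on hab (intervalIntegrable_sub_rpow_neg_div_Gamma hν1)
    intervalIntegrable_const fun s hs => div_le_div_of_nonneg_right
      (Real.rpow_le_rpow_of_nonpos (by linarith) (by linarith [hs.2]) (by linarith)) hΓ.le

variable {t : ℕ → ℝ} {j k : ℕ}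

theorem le_L1coeff (hν0 : 0 ≤ ν) (hν1 : ν < 1) (hk : t (k - 1) < t k) (hkj : t k ≤ t j) :
    (t j - t (k - 1)) ^ (-ν) / Real.Gamma (1 - ν) ≤ L1coeff ν t j k := by
  rw [L1coeff, le_inv_mul_iff₀ (sub_pos.mpr hk)]
  exact mul_le_integral_sub_rpow_neg_div_Gamma hν0 hν1 hk.le hkj

theorem L1coeff_le (hν0 : 0 ≤ ν) (hν1 : ν < 1) (hk : t (k - 1) < t k) (hkj : t k < t j) :
    L1coeff ν t j k ≤ (t j - t k) ^ (-ν) / Real.Gamma (1 - ν) := by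
  rw [L1coeff, inv_mul_le_iff₀ (sub_pos.mpr hk)]
  exact integral_sub_rpow_neg_div_Gamma_le_mul hν0 hν1 hk.le hkj

theorem L1coeff_pos_s5 (hν0 : 0 ≤ ν) (hν1 : ν < 1) (hk : t (k - 1) < t k) (hkj : t k ≤ t j) :
    0 < L1coeff ν t j k := by
  refine lt_of_lt_of_le ?_ (le_L1coeff hν0 hν1 hk hkj)
  exact div_pos (Real.rpow_pos_of_pos (by linarith) _)
    (Real.Gamma_pos_of_pos (sub_pos.mpr hν1))

theorem L1coeff_le_L1coeff_succ_s5 (hν0 : 0 ≤ ν) (hν1 : ν < 1) (hk : t (k - 1) < t k)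
    (hk' : t k < t (k + 1)) (hkj : t (k + 1) ≤ t j) :
    L1coeff ν t j k ≤ L1coeff ν t j (k + 1) :=
  calc L1coeff ν t j k ≤ (t j - t k) ^ (-ν) / Real.Gamma (1 - ν) :=
        L1coeff_le hν0 hν1 hk (hk'.trans_le hkj)
    _ ≤ L1coeff ν t j (k + 1) := le_L1coeff (k := k + 1) hν0 hν1 hk' hkj

end L1Coefficients

theorem complementary_kernel_nonneg {a : ℕ → ℕ → ℝ} {p : ℕ → ℝ} {n : ℕ}
    (hpos : ∀ j, 1 ≤ j → j ≤ n → 0 < a j j)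
    (hmono : ∀ i k, 1 ≤ k → k < i → i ≤ n → a i k ≤ a i (k + 1))
    (hp : ∀ k, 1 ≤ k → k ≤ n → ∑ j ∈ Icc k n, p j * a j k = 1)
    (j : ℕ) (hj : 1 ≤ j) (hjn : j ≤ n) : 0 ≤ p j := by
  have hlater : ∑ i ∈ Ioc j n, p i * a i j ≤ 1 := by
    rcases hjn.lt_or_eq with hjn | rfl
    · calc ∑ i ∈ Ioc j n, p i * a i j
          ≤ ∑ i ∈ Ioc j n, p i * a i (j + 1) := by
            refine sum_le_sum fun i hi => ?_
            obtain ⟨hji, hin⟩ := mem_Ioc.mp hi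
            exact mul_le_mul_of_nonneg_left (hmono i j hj hji hin)
              (complementary_kernel_nonneg hpos hmono hp i (by omega) hin)
        _ = 1 := by rw [← Icc_add_one_left_eq_Ioc]; exact hp (j + 1) (by omega) hjn
    · simp
  have hdiag : p j * a j j = 1 - ∑ i ∈ Ioc j n, p i * a i j := by
    rw [← hp j hj hjn, ← add_sum_Ioc_eq_sum_Icc hjn, add_sub_cancel_right]
  exact nonneg_of_mul_nonneg_left (by linarith) (hpos j hj hjn)
termination_by n - j

/-- Uniform bound `∑_{j=1}^n P^{(n)}_{n-j} ω_{1-ν}(t_j) ≤ C`, with `C = C(ν)` independent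
of the mesh, where `ω_{1-ν}(t) = t^{-ν}/Γ(1-ν)` and `P n j` denotes `P^{(n)}_{n-j}`,
the complementary convolution kernels of the L1 coefficients. -/
theorem complementary_kernel_omega_sum_bound (ν : ℝ) (hν : ν ∈ Set.Ioo (0 : ℝ) 1) :
    ∃ C > 0, ∀ (N : ℕ), 0 < N → ∀ (T : ℝ), 0 < T →
      ∀ t : ℕ → ℝ, t 0 = 0 → t N = T → (∀ k < N, t k < t (k + 1)) →
      ∀ P : ℕ → ℕ → ℝ,
        (∀ n k, 1 ≤ k → k ≤ n → n ≤ N →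
          ∑ j ∈ Finset.Icc k n, P n j * L1coeff ν t j k = 1) →
        ∀ n, 1 ≤ n → n ≤ N →
          ∑ j ∈ Finset.Icc 1 n, P n j * ((t j) ^ (-ν) / Real.Gamma (1 - ν)) ≤ C := by
  obtain ⟨hν0, hν1⟩ := hν
  refine ⟨1, one_pos, fun N _ T _ t ht0 _ hstep P hP n hn hnN => ?_⟩
  have ht : StrictMonoOn t (Set.Iic N) := strictMonoOn_Iic_of_lt_succ hstep
  have ht_pred : ∀ k, 1 ≤ k → k ≤ N → t (k - 1) < t k := fun k hk hkN =>
    ht (Set.mem_Iic.mpr (by omega)) (Set.mem_Iic.mpr hkN) (by omega)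
  have ht_le : ∀ k j, k ≤ j → j ≤ N → t k ≤ t j := fun k j hkj hjN =>
    ht.monotoneOn (Set.mem_Iic.mpr (by omega)) (Set.mem_Iic.mpr hjN) hkj
  have hP_nonneg : ∀ j, 1 ≤ j → j ≤ n → 0 ≤ P n j :=
    complementary_kernel_nonneg (a := L1coeff ν t)
      (fun j hj hjn => L1coeff_pos_s5 hν0.le hν1 (ht_pred j hj (by omega)) le_rfl)
      (fun i k hk hki hin => L1coeff_le_L1coeff_succ_s5 hν0.le hν1 (ht_pred k hk (by omega))
        (ht_pred (k + 1) (by omega) (by omega)) (ht_le (k + 1) i hki (by omega)))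
      (fun k hk hkn => hP n k hk hkn hnN)
  calc ∑ j ∈ Icc 1 n, P n j * (t j ^ (-ν) / Real.Gamma (1 - ν))
      ≤ ∑ j ∈ Icc 1 n, P n j * L1coeff ν t j 1 := by
        refine sum_le_sum fun j hj => ?_
        obtain ⟨hj1, hjn⟩ := mem_Icc.mp hj
        refine mul_le_mul_of_nonneg_left ?_ (hP_nonneg j hj1 hjn)
        simpa [ht0] using
          le_L1coeff hν0.le hν1 (ht_pred 1 le_rfl (by omega)) (ht_le 1 j hj1 (by omega))
    _ = 1 := hP n 1 le_rfl hn hnN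
end
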